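/- For the degenerate Jacobi weight w(x,t) on [0,1], the auxiliary quantities satisfy the sum rule (t−1) R_n − t x_n + α + β + γ + 2n + 1 = 0, where x_n = (α/h_n)∫_0^1 P_n^2 w/y dy and R_n = (β/h_n)∫_0^1 P_n^2 w/(1−y) dy. -/

import Mathlib

/-!
Put `G y = P_n(y)^2 (y - t) w(y)`. It vanishes at `0`, `t` and `1`, and away from these points
`w'/w = α/y - β/(1-y) + γ/(y-t)`, so, with `Q = 2 (X - t) P_n' + (α+β+γ+1) P_n`,
`G' = P_n Q w - α t P_n^2 w / y - β (1-t) P_n^2 w / (1-y)`, whose integral over `[0,1]` is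
therefore `0`. As `Q` has degree `n` and leading coefficient `2n + α + β + γ + 1`, orthogonality
gives `∫ P_n Q w = (2n + α + β + γ + 1) h_n`, and the sum rule is the resulting identity
divided by `-h_n`.
-/

open MeasureTheory Polynomial Set

section Orthogonal

variable {R : Type*} [CommRing R]

theorem degree_sub_C_coeff_mul_lt {p q : R[X]} {m : ℕ} (hp : p.Monic) (hpm : p.natDegree = m)
    (hq : q.natDegree ≤ m) : (q - C (q.coeff m) * p).degree < m := by
  rw [degree_lt_iff_coeff_zero]
  intro k hk
  rcases hk.eq_or_lt with rfl | hk
  · simp [coeff_C_mul, ← hpm, hp.coeff_natDegree]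
  · simp [coeff_C_mul, coeff_eq_zero_of_natDegree_lt (hq.trans_lt hk),
      coeff_eq_zero_of_natDegree_lt (hpm.trans_lt hk)]

theorem natDegree_derivative_mul_X_sub_C_le (p : R[X]) (t : R) :
    (derivative p * (X - C t)).natDegree ≤ p.natDegree := by
  rcases Nat.eq_zero_or_pos p.natDegree with hp | hp
  · simp [derivative_of_natDegree_zero hp]
  · have := natDegree_derivative_le p
    have := natDegree_mul_le (p := derivative p) (q := X - C t)
    have := natDegree_X_sub_C_le t
    omega

theorem coeff_derivative_mul_X_sub_C_natDegree (p : R[X]) (t : R) :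
    (derivative p * (X - C t)).coeff p.natDegree = p.natDegree * p.leadingCoeff := by
  rcases h : p.natDegree with _ | k
  · simp [derivative_of_natDegree_zero h]
  · rw [coeff_mul_X_sub_C, coeff_derivative, coeff_derivative,
      coeff_eq_zero_of_natDegree_lt (by omega : p.natDegree < k + 1 + 1), leadingCoeff, h]
    push_cast; ring

variable (L : R[X] →ₗ[R] R) {P : ℕ → R[X]} {h : ℕ → R}

theorem apply_mul_eq_zero_of_degree_lt (hmonic : ∀ n, (P n).Monic)
    (hdeg : ∀ n, (P n).natDegree = n) (horth : ∀ m n, L (P m * P n) = if m = n then h n else 0)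
    {n : ℕ} {q : R[X]} (hq : q.degree < n) : L (P n * q) = 0 := by
  suffices ∀ m ≤ n, ∀ q : R[X], q.degree < m → L (P n * q) = 0 from this n le_rfl q hq
  intro m
  induction m with
  | zero =>
    intro _ q hq
    simp [degree_eq_bot.mp (Nat.WithBot.lt_zero_iff.mp (by simpa using hq))]
  | succ m ih =>
    intro hmn q hq
    have hqm : q.natDegree ≤ m := by
      by_cases hq0 : q = 0
      · simp [hq0]
      · exact Nat.lt_succ_iff.mp ((natDegree_lt_iff_degree_lt hq0).mpr hq)
    have hr := degree_sub_C_coeff_mul_lt (hmonic m) (hdeg m) hqm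
    rw [← sub_add_cancel q (C (q.coeff m) * P m), mul_add, map_add, ih (by omega) _ hr,
      mul_left_comm, ← smul_eq_C_mul, map_smul, horth, if_neg (by omega), smul_zero, zero_add]

theorem apply_mul_eq_coeff_mul (hmonic : ∀ n, (P n).Monic) (hdeg : ∀ n, (P n).natDegree = n)
    (horth : ∀ m n, L (P m * P n) = if m = n then h n else 0) {n : ℕ} {q : R[X]}
    (hq : q.natDegree ≤ n) : L (P n * q) = q.coeff n * h n := by
  conv_lhs => rw [← sub_add_cancel q (C (q.coeff n) * P n)]
  rw [mul_add, map_add, apply_mul_eq_zero_of_degree_lt L hmonic hdeg horth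
      (degree_sub_C_coeff_mul_lt (hmonic n) (hdeg n) hq),
    mul_left_comm, ← smul_eq_C_mul, map_smul, horth, if_pos rfl, smul_eq_mul, zero_add]

end Orthogonal

noncomputable def momentFunctional (w : ℝ → ℝ) (a b : ℝ)
    (hw : IntervalIntegrable w volume a b) : ℝ[X] →ₗ[ℝ] ℝ where
  toFun p := ∫ x in a..b, p.eval x * w x
  map_add' p q := by
    simp only [eval_add, add_mul]
    exact intervalIntegral.integral_add (hw.continuousOn_mul p.continuous.continuousOn)
      (hw.continuousOn_mul q.continuous.continuousOn)
  map_smul' c p := by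
    simp only [eval_smul, smul_eq_mul, mul_assoc, intervalIntegral.integral_const_mul,
      RingHom.id_apply]

theorem momentFunctional_apply (w : ℝ → ℝ) (a b : ℝ) (hw : IntervalIntegrable w volume a b)
    (p : ℝ[X]) : momentFunctional w a b hw p = ∫ x in a..b, p.eval x * w x :=
  rfl

theorem intervalIntegrable_rpow_sub_one_mul_one_sub_rpow_sub_one {α β : ℝ} (hα : 0 < α)
    (hβ : 0 < β) :
    IntervalIntegrable (fun y : ℝ => y ^ (α - 1) * (1 - y) ^ (β - 1)) volume 0 1 := by
  refine (Complex.betaIntegral_convergent (u := α) (v := β) (by simpa) (by simpa)).norm.congr_uIoo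
    fun y hy => ?_
  rw [uIoo_of_le zero_le_one] at hy
  have h1y : 0 < 1 - y := sub_pos.2 hy.2
  have hcast : 1 - (y : ℂ) = ((1 - y : ℝ) : ℂ) := by push_cast; ring
  dsimp only
  rw [norm_mul, hcast, Complex.norm_cpow_eq_rpow_re_of_pos hy.1,
    Complex.norm_cpow_eq_rpow_re_of_pos h1y]
  simp

theorem hasDerivAt_abs_sub_rpow {t y : ℝ} (γ : ℝ) (hy : y ≠ t) :
    HasDerivAt (fun x => |x - t| ^ γ) (γ * |y - t| ^ γ / (y - t)) y := by
  have hyt : y - t ≠ 0 := sub_ne_zero.2 hy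
  have habs : HasDerivAt (fun x => |x - t|) (SignType.sign (y - t) : ℝ) y := by
    simpa using (hasDerivAt_abs hyt).comp_sub_const y t
  convert habs.rpow_const (p := γ) (Or.inl (abs_ne_zero.2 hyt)) using 1
  rw [Real.rpow_sub_one (abs_ne_zero.2 hyt)]
  rcases hyt.lt_or_gt with h | h
  · simp only [abs_of_neg h, neg_sub, h, sign_neg, SignType.coe_neg, SignType.coe_one, neg_mul,
      one_mul]
    field_simp
    ring
  · simp only [abs_of_pos h, h, sign_pos, SignType.coe_one, one_mul]
    field_simp

noncomputable def degJacobiWeight (α β γ A B t x : ℝ) : ℝ :=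
  x ^ α * (1 - x) ^ β * |x - t| ^ γ * (A + B * (if t < x then (1 : ℝ) else 0))

section DegJacobiWeight

variable {α β γ A B t : ℝ}

local notation "w" => degJacobiWeight α β γ A B t

theorem measurable_degJacobiWeight : Measurable w := by
  unfold degJacobiWeight
  exact (by fun_prop : Measurable fun x : ℝ => x ^ α * (1 - x) ^ β * |x - t| ^ γ).mul
    (measurable_const.add (measurable_const.mul
      (Measurable.ite measurableSet_Ioi measurable_const measurable_const)))

theorem abs_degJacobiWeight_le (hγ : 0 ≤ γ) (ht : t ∈ Icc (0 : ℝ) 1) {y : ℝ}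
    (hy : y ∈ Icc (0 : ℝ) 1) : |w y| ≤ (|A| + |A + B|) * (y ^ α * (1 - y) ^ β) := by
  have hyt : |y - t| ^ γ ≤ 1 :=
    Real.rpow_le_one (abs_nonneg _)
      (abs_sub_le_iff.2 ⟨by linarith [hy.2, ht.1], by linarith [hy.1, ht.2]⟩) hγ
  have hstep : |A + B * (if t < y then (1 : ℝ) else 0)| ≤ |A| + |A + B| := by
    split_ifs <;> simp [abs_nonneg]
  have h0 : 0 ≤ y ^ α * (1 - y) ^ β :=
    mul_nonneg (Real.rpow_nonneg hy.1 _) (Real.rpow_nonneg (sub_nonneg.2 hy.2) _)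
  rw [degJacobiWeight, abs_mul, abs_mul, abs_of_nonneg h0, abs_of_nonneg (by positivity)]
  calc y ^ α * (1 - y) ^ β * |y - t| ^ γ * |A + B * (if t < y then (1 : ℝ) else 0)|
      ≤ y ^ α * (1 - y) ^ β * 1 * (|A| + |A + B|) := by gcongr
    _ = _ := by ring

theorem intervalIntegrable_degJacobiWeight_div (hα : 0 < α) (hβ : 0 < β) (hγ : 0 ≤ γ)
    (ht : t ∈ Icc (0 : ℝ) 1) :
    IntervalIntegrable (fun y => w y / (y * (1 - y))) volume 0 1 := by
  refine ((intervalIntegrable_rpow_sub_one_mul_one_sub_rpow_sub_one hα hβ).const_mul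
    (|A| + |A + B|)).mono_fun'
    (measurable_degJacobiWeight.div (by fun_prop)).aestronglyMeasurable ?_
  rw [uIoc_of_le zero_le_one, ← restrict_Ioo_eq_restrict_Ioc]
  refine ae_restrict_of_forall_mem measurableSet_Ioo fun y hy => ?_
  have h1y : 0 < 1 - y := sub_pos.2 hy.2
  dsimp only
  rw [Real.norm_eq_abs, abs_div, abs_of_pos (mul_pos hy.1 h1y), div_le_iff₀ (mul_pos hy.1 h1y),
    Real.rpow_sub_one hy.1.ne', Real.rpow_sub_one h1y.ne']
  calc |w y| ≤ (|A| + |A + B|) * (y ^ α * (1 - y) ^ β) :=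
        abs_degJacobiWeight_le hγ ht (Ioo_subset_Icc_self hy)
    _ = _ := by field_simp [hy.1.ne', h1y.ne']

theorem degJacobiWeight_zero (hα : α ≠ 0) : w 0 = 0 := by
  simp [degJacobiWeight, Real.zero_rpow hα]

theorem degJacobiWeight_one (hβ : β ≠ 0) : w 1 = 0 := by
  simp [degJacobiWeight, Real.zero_rpow hβ]

-- The factor `x - t` turns the jump of the step function at `t` into the kink `max (x - t) 0`.
theorem continuous_sub_mul_degJacobiWeight (hα : 0 ≤ α) (hβ : 0 ≤ β) (hγ : 0 ≤ γ) :
    Continuous fun x => (x - t) * w x := by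
  have h : ∀ x, (x - t) * w x =
      x ^ α * (1 - x) ^ β * |x - t| ^ γ * (A * (x - t) + B * max (x - t) 0) := by
    intro x
    simp only [degJacobiWeight]
    split_ifs with hx
    · rw [max_eq_left (sub_nonneg.2 hx.le)]; ring
    · rw [max_eq_right (sub_nonpos.2 (not_lt.1 hx))]; ring
  simp only [h]
  fun_prop (disch := assumption)

theorem hasDerivAt_degJacobiWeight {y : ℝ} (hy0 : 0 < y) (hy1 : y < 1) (hyt : y ≠ t) :
    HasDerivAt w (w y * (α / y - β / (1 - y) + γ / (y - t))) y := by
  have hθ : HasDerivAt (fun x => A + B * (if t < x then (1 : ℝ) else 0)) 0 y := by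
    refine (hasDerivAt_const y (A + B * (if t < y then (1 : ℝ) else 0))).congr_of_eventuallyEq ?_
    rcases hyt.lt_or_gt with h | h
    · filter_upwards [Iio_mem_nhds h] with x hx
      simp [not_lt.2 (mem_Iio.1 hx).le, not_lt.2 h.le]
    · filter_upwards [Ioi_mem_nhds h] with x hx
      simp [show t < x from hx, h]
  have h1y : 1 - y ≠ 0 := sub_ne_zero.2 hy1.ne'
  have hd := (((Real.hasDerivAt_rpow_const (p := α) (Or.inl hy0.ne')).fun_mul
    (((hasDerivAt_id y).const_sub 1).rpow_const (p := β) (Or.inl h1y))).fun_mul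
    (hasDerivAt_abs_sub_rpow γ hyt)).fun_mul hθ
  refine hd.congr_deriv ?_
  simp only [degJacobiWeight, Real.rpow_sub_one hy0.ne', Real.rpow_sub_one h1y, id]
  field_simp
  ring

theorem IntervalIntegrable.of_eqOn_mul_degJacobiWeight_div (hα : 0 < α) (hβ : 0 < β)
    (hγ : 0 ≤ γ) (ht : t ∈ Icc (0 : ℝ) 1) {f c : ℝ → ℝ} (hc : Continuous c)
    (hf : EqOn (fun y => c y * (w y / (y * (1 - y)))) f (Ioo 0 1)) :
    IntervalIntegrable f volume 0 1 :=
  ((intervalIntegrable_degJacobiWeight_div hα hβ hγ ht).continuousOn_mul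
    hc.continuousOn).congr_uIoo (by rwa [uIoo_of_le zero_le_one])

theorem intervalIntegrable_mul_degJacobiWeight (hα : 0 < α) (hβ : 0 < β) (hγ : 0 ≤ γ)
    (ht : t ∈ Icc (0 : ℝ) 1) {c : ℝ → ℝ} (hc : Continuous c) :
    IntervalIntegrable (fun y => c y * w y) volume 0 1 :=
  .of_eqOn_mul_degJacobiWeight_div hα hβ hγ ht (c := fun y => c y * (y * (1 - y))) (by fun_prop)
    fun y hy => by field_simp [hy.1.ne', (sub_pos.2 hy.2).ne']

theorem intervalIntegrable_mul_degJacobiWeight_div_self (hα : 0 < α) (hβ : 0 < β)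
    (hγ : 0 ≤ γ) (ht : t ∈ Icc (0 : ℝ) 1) {c : ℝ → ℝ} (hc : Continuous c) :
    IntervalIntegrable (fun y => c y * w y / y) volume 0 1 :=
  .of_eqOn_mul_degJacobiWeight_div hα hβ hγ ht (c := fun y => c y * (1 - y)) (by fun_prop)
    fun y hy => by field_simp [hy.1.ne', (sub_pos.2 hy.2).ne']

theorem intervalIntegrable_mul_degJacobiWeight_div_one_sub (hα : 0 < α) (hβ : 0 < β)
    (hγ : 0 ≤ γ) (ht : t ∈ Icc (0 : ℝ) 1) {c : ℝ → ℝ} (hc : Continuous c) :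
    IntervalIntegrable (fun y => c y * w y / (1 - y)) volume 0 1 :=
  .of_eqOn_mul_degJacobiWeight_div hα hβ hγ ht (c := fun y => c y * y) (by fun_prop)
    fun y hy => by field_simp [hy.1.ne', (sub_pos.2 hy.2).ne']

theorem integral_eval_mul_degJacobiWeight (hα : 0 < α) (hβ : 0 < β) (hγ : 0 ≤ γ)
    (ht : t ∈ Icc (0 : ℝ) 1) (p : ℝ[X]) :
    ∫ y in (0 : ℝ)..1,
        (p * (C 2 * (derivative p * (X - C t)) + C (α + β + γ + 1) * p)).eval y * w y
      = α * t * (∫ y in (0 : ℝ)..1, p.eval y ^ 2 * w y / y)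
        + β * (1 - t) * ∫ y in (0 : ℝ)..1, p.eval y ^ 2 * w y / (1 - y) := by
  set q := p * (C 2 * (derivative p * (X - C t)) + C (α + β + γ + 1) * p) with hq
  have hp2 : Continuous fun y => p.eval y ^ 2 := p.continuous.pow 2
  have i₁ := intervalIntegrable_mul_degJacobiWeight hα hβ (A := A) (B := B) hγ ht q.continuous
  have i₂ := (intervalIntegrable_mul_degJacobiWeight_div_self hα hβ (A := A) (B := B) hγ ht
    hp2).const_mul (α * t)
  have i₃ := (intervalIntegrable_mul_degJacobiWeight_div_one_sub hα hβ (A := A) (B := B) hγ ht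
    hp2).const_mul (β * (1 - t))
  have hG : ∀ y ∈ Ioo (0 : ℝ) 1 \ {t}, HasDerivAt (fun x => p.eval x ^ 2 * ((x - t) * w x))
      (q.eval y * w y - α * t * (p.eval y ^ 2 * w y / y)
        - β * (1 - t) * (p.eval y ^ 2 * w y / (1 - y))) y := by
    rintro y ⟨⟨hy0, hy1⟩, hyt⟩
    have hyt' : y - t ≠ 0 := sub_ne_zero.2 hyt
    have h1y : 1 - y ≠ 0 := sub_ne_zero.2 hy1.ne'
    refine ((p.hasDerivAt y).fun_pow 2 |>.fun_mul (((hasDerivAt_id y).sub_const t).fun_mul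
      (hasDerivAt_degJacobiWeight hy0 hy1 hyt))).congr_deriv ?_
    simp only [hq, eval_mul, eval_add, eval_sub, eval_C, eval_X, id]
    field_simp
    ring
  have hFTC := integral_eq_of_hasDerivAt_off_countable_of_le
    (fun x => p.eval x ^ 2 * ((x - t) * w x)) _ zero_le_one (countable_singleton t)
    (hp2.mul (continuous_sub_mul_degJacobiWeight hα.le hβ.le hγ)).continuousOn
    hG ((i₁.sub i₂).sub i₃)
  rw [intervalIntegral.integral_sub (i₁.sub i₂) i₃, intervalIntegral.integral_sub i₁ i₂,
    intervalIntegral.integral_const_mul, intervalIntegral.integral_const_mul,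
    degJacobiWeight_zero hα.ne', degJacobiWeight_one hβ.ne'] at hFTC
  linear_combination hFTC

end DegJacobiWeight

theorem sum_rule_general (α β γ A B t : ℝ)
    (hα : 0 < α) (hβ : 0 < β) (hγ : 0 < γ)
    (ht : t ∈ Set.Ioo (0 : ℝ) 1)
    (w : ℝ → ℝ)
    (hw : ∀ x, w x = x ^ α * (1 - x) ^ β * |x - t| ^ γ *
      (A + B * (if t < x then (1 : ℝ) else 0)))
    (P : ℕ → Polynomial ℝ) (h : ℕ → ℝ)
    (hmonic : ∀ n, (P n).Monic)
    (hdeg : ∀ n, (P n).natDegree = n)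
    (horth : ∀ m n, ∫ x in (0 : ℝ)..1, (P m).eval x * (P n).eval x * w x
      = if m = n then h n else 0)
    (hpos : ∀ n, 0 < h n)
    (n : ℕ) :
    (t - 1) * ((β / h n) * ∫ y in (0 : ℝ)..1, ((P n).eval y) ^ 2 * w y / (1 - y))
      - t * ((α / h n) * ∫ y in (0 : ℝ)..1, ((P n).eval y) ^ 2 * w y / y)
      + α + β + γ + 2 * n + 1 = 0 := by
  obtain rfl : w = degJacobiWeight α β γ A B t := funext hw
  have ht' : t ∈ Icc (0 : ℝ) 1 := Ioo_subset_Icc_self ht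
  let L := momentFunctional _ 0 1 (by
    simpa using intervalIntegrable_mul_degJacobiWeight hα hβ hγ.le ht' (A := A) (B := B)
      (c := fun _ => 1) continuous_const)
  have horthL : ∀ m k, L (P m * P k) = if m = k then h k else 0 := by
    simpa [L, momentFunctional_apply] using horth
  set Q := C 2 * (derivative (P n) * (X - C t)) + C (α + β + γ + 1) * P n
  have hQdeg : Q.natDegree ≤ n :=
    (natDegree_add_le _ _).trans <| max_le
      ((natDegree_C_mul_le _ _).trans
        ((natDegree_derivative_mul_X_sub_C_le _ _).trans (hdeg n).le))
      ((natDegree_C_mul_le _ _).trans (hdeg n).le)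
  have hQn : Q.coeff n = 2 * n + (α + β + γ + 1) := by
    have hlead : (P n).coeff n = 1 := by simpa [hdeg n] using (hmonic n).coeff_natDegree
    have hder : (derivative (P n) * (X - C t)).coeff n = (n : ℝ) := by
      simpa [hdeg n, hmonic n] using coeff_derivative_mul_X_sub_C_natDegree (P n) t
    simp only [Q, coeff_add, coeff_C_mul, hlead, hder]
    ring
  have hLQ := apply_mul_eq_coeff_mul L hmonic hdeg horthL hQdeg
  rw [momentFunctional_apply, integral_eval_mul_degJacobiWeight hα hβ hγ.le ht', hQn] at hLQ
  have hh := (hpos n).ne'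
  field_simp
  linear_combination -hLQ

/-- The sum rule `(t−1) R_n − t x_n + α + β + γ + 2n + 1 = 0` for the auxiliary
quantities of the degenerate Jacobi weight. -/
theorem sum_rule (α β γ A B t : ℝ)
    (hα : 0 < α) (hβ : 0 < β) (hγ : 0 < γ)
    (hA : 0 ≤ A) (hAB : 0 ≤ A + B) (ht : t ∈ Set.Ioo (0 : ℝ) 1)
    (w : ℝ → ℝ)
    (hw : ∀ x, w x = x ^ α * (1 - x) ^ β * |x - t| ^ γ *
      (A + B * (if t < x then (1 : ℝ) else 0)))
    (P : ℕ → Polynomial ℝ) (h : ℕ → ℝ)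
    (hmonic : ∀ n, (P n).Monic)
    (hdeg : ∀ n, (P n).natDegree = n)
    (horth : ∀ m n, ∫ x in (0 : ℝ)..1, (P m).eval x * (P n).eval x * w x
      = if m = n then h n else 0)
    (hpos : ∀ n, 0 < h n)
    (n : ℕ) :
    (t - 1) * ((β / h n) * ∫ y in (0 : ℝ)..1, ((P n).eval y) ^ 2 * w y / (1 - y))
      - t * ((α / h n) * ∫ y in (0 : ℝ)..1, ((P n).eval y) ^ 2 * w y / y)
      + α + β + γ + 2 * n + 1 = 0 :=
  sum_rule_general α β γ A B t hα hβ hγ ht w hw P h hmonic hdeg horth hpos n
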